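/- Let {Y_t}_{t≥1} be a real-valued weakly stationary zero-mean sequence with autocovariance γ(h) satisfying |γ(h)| ≤ ω β^{|h|} for ω > 0, β ∈ (0,1), and let ρ ∈ (0,1). Define the weighted sum S_n = ∑_{t=0}^{n−1} ρ^{n−t−1} Y_t and effective sample size n_eff = ∑_{t=1}^{n} ρ^{n−t} = (1−ρ^n)/(1−ρ). Then Var(S_n / n_eff) ≤ (1/n_eff²) · (1 + ρβ)/((1−ρ²)(1−ρβ)) · ω, and in particular, whenever ρ^n ≤ 1/2, Var(S_n / n_eff) ≤ (2ω(1+β)/(1−β)) · n_eff⁻¹. -/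

import Mathlib

open MeasureTheory
open Finset

lemma geo_le' {x : ℝ} (h0 : 0 ≤ x) (h1 : x < 1) (n : ℕ) :
    ∑ i ∈ range n, x ^ i ≤ 1 / (1 - x) := by
  rw [geom_sum_eq h1.ne n]
  have hx : (0:ℝ) < 1 - x := by linarith
  have : (x ^ n - 1) / (x - 1) = (1 - x ^ n) / (1 - x) := by
    rw [div_eq_div_iff (by linarith) hx.ne']; ring
  rw [this, div_le_div_iff₀ hx hx]
  nlinarith [pow_nonneg h0 n]

lemma double_geom_bound' {ρ β : ℝ} (hρ0 : 0 < ρ) (hρ1 : ρ < 1) (hβ0 : 0 < β) (hβ1 : β < 1)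
    (n : ℕ) :
    ∑ s ∈ range n, ∑ t ∈ range n, ρ ^ s * ρ ^ t * β ^ Nat.dist s t
      ≤ (1 + ρ * β) / ((1 - ρ ^ 2) * (1 - ρ * β)) := by
  have hρ2 : (0:ℝ) < 1 - ρ ^ 2 := by nlinarith
  have hρβ1 : ρ * β < 1 := by nlinarith
  have hρβ0 : (0:ℝ) < ρ * β := mul_pos hρ0 hβ0
  have hρβ : (0:ℝ) < 1 - ρ * β := by linarith
  set g : ℕ × ℕ → ℝ := fun q => (ρ ^ 2) ^ q.1 * (ρ * β) ^ q.2 with hg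
  have hgnn : ∀ q : ℕ × ℕ, 0 ≤ g q := fun q => by positivity
  have hgsum : ∀ (A : Finset (ℕ × ℕ)), A ⊆ range n ×ˢ range n →
      ∑ q ∈ A, g q ≤ (1 / (1 - ρ ^ 2)) * (1 / (1 - ρ * β)) := by
    intro A hA
    calc ∑ q ∈ A, g q ≤ ∑ q ∈ range n ×ˢ range n, g q :=
          Finset.sum_le_sum_of_subset_of_nonneg hA (fun q _ _ => hgnn q)
      _ = (∑ s ∈ range n, (ρ ^ 2) ^ s) * (∑ t ∈ range n, (ρ * β) ^ t) := by
          rw [Finset.sum_product]; rw [← Finset.sum_mul_sum]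
      _ ≤ (1 / (1 - ρ ^ 2)) * (1 / (1 - ρ * β)) := by
          apply mul_le_mul (geo_le' (by positivity) (by nlinarith) n)
            (geo_le' hρβ0.le hρβ1 n) (Finset.sum_nonneg fun i _ => by positivity)
            (by positivity)
  rw [← Finset.sum_product']
  set P := range n ×ˢ range n with hP
  have hsplit := Finset.sum_filter_add_sum_filter_not P (fun p : ℕ × ℕ => p.1 ≤ p.2)
      (fun p => ρ ^ p.1 * ρ ^ p.2 * β ^ Nat.dist p.1 p.2)
  rw [← hsplit]
  have hA : ∑ p ∈ P.filter (fun p : ℕ × ℕ => p.1 ≤ p.2),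
      ρ ^ p.1 * ρ ^ p.2 * β ^ Nat.dist p.1 p.2
      ≤ (1 / (1 - ρ ^ 2)) * (1 / (1 - ρ * β)) := by
    have heq : ∀ p ∈ P.filter (fun p : ℕ × ℕ => p.1 ≤ p.2),
        ρ ^ p.1 * ρ ^ p.2 * β ^ Nat.dist p.1 p.2 = g (p.1, p.2 - p.1) := by
      intro p hp
      obtain ⟨-, hle⟩ := Finset.mem_filter.mp hp
      rw [Nat.dist_eq_sub_of_le hle, hg]
      simp only [mul_pow, ← pow_mul, ← pow_add]
      rw [← mul_assoc, ← pow_add, show 2 * p.1 + (p.2 - p.1) = p.1 + p.2 by omega]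
    rw [Finset.sum_congr rfl heq]
    rw [← Finset.sum_image (f := g) (g := fun p : ℕ × ℕ => (p.1, p.2 - p.1))
      (fun p hp q hq h => by
        obtain ⟨-, hp2⟩ := Finset.mem_filter.mp hp
        obtain ⟨-, hq2⟩ := Finset.mem_filter.mp hq
        have h1 := congrArg Prod.fst h
        have h2 := congrArg Prod.snd h
        simp only at h1 h2
        exact Prod.ext h1 (by omega))]
    apply hgsum
    intro q hq
    obtain ⟨p, hp, rfl⟩ := Finset.mem_image.mp hq
    obtain ⟨hpP, -⟩ := Finset.mem_filter.mp hp
    rw [hP, Finset.mem_product] at hpP ⊢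
    obtain ⟨h1, h2⟩ := hpP
    simp only [Finset.mem_range] at *
    omega
  have hB : ∑ p ∈ P.filter (fun p : ℕ × ℕ => ¬ p.1 ≤ p.2),
      ρ ^ p.1 * ρ ^ p.2 * β ^ Nat.dist p.1 p.2
      ≤ (1 / (1 - ρ ^ 2)) * (ρ * β * (1 / (1 - ρ * β))) := by
    have heq : ∀ p ∈ P.filter (fun p : ℕ × ℕ => ¬ p.1 ≤ p.2),
        ρ ^ p.1 * ρ ^ p.2 * β ^ Nat.dist p.1 p.2 = g (p.2, p.1 - p.2) := by
      intro p hp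
      obtain ⟨-, hlt⟩ := Finset.mem_filter.mp hp
      rw [Nat.dist_eq_sub_of_le_right (by omega), hg]
      simp only [mul_pow, ← pow_mul, ← pow_add]
      rw [← mul_assoc, ← pow_add, show 2 * p.2 + (p.1 - p.2) = p.1 + p.2 by omega]
    rw [Finset.sum_congr rfl heq]
    rw [← Finset.sum_image (f := g) (g := fun p : ℕ × ℕ => (p.2, p.1 - p.2))
      (fun p hp q hq h => by
        obtain ⟨-, hp2⟩ := Finset.mem_filter.mp hp
        obtain ⟨-, hq2⟩ := Finset.mem_filter.mp hq
        have h1 := congrArg Prod.fst h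
        have h2 := congrArg Prod.snd h
        simp only at h1 h2
        exact Prod.ext (by omega) (by omega))]
    have hsub : Finset.image (fun p : ℕ × ℕ => (p.2, p.1 - p.2))
        (P.filter (fun p : ℕ × ℕ => ¬ p.1 ≤ p.2)) ⊆ range n ×ˢ Finset.Ico 1 n := by
      intro q hq
      obtain ⟨p, hp, rfl⟩ := Finset.mem_image.mp hq
      obtain ⟨hpP, hlt⟩ := Finset.mem_filter.mp hp
      rw [hP, Finset.mem_product] at hpP
      obtain ⟨h1, h2⟩ := hpP
      rw [Finset.mem_product, Finset.mem_range, Finset.mem_Ico]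
      simp only [Finset.mem_range] at h1 h2
      omega
    calc ∑ q ∈ Finset.image (fun p : ℕ × ℕ => (p.2, p.1 - p.2))
          (P.filter (fun p : ℕ × ℕ => ¬ p.1 ≤ p.2)), g q
        ≤ ∑ q ∈ range n ×ˢ Finset.Ico 1 n, g q :=
          Finset.sum_le_sum_of_subset_of_nonneg hsub (fun q _ _ => hgnn q)
      _ = (∑ s ∈ range n, (ρ ^ 2) ^ s) * (∑ t ∈ Finset.Ico 1 n, (ρ * β) ^ t) := by
          rw [Finset.sum_product, ← Finset.sum_mul_sum]
      _ ≤ (1 / (1 - ρ ^ 2)) * (ρ * β * (1 / (1 - ρ * β))) := by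
          apply mul_le_mul (geo_le' (by positivity) (by nlinarith) n) ?_
            (Finset.sum_nonneg fun i _ => by positivity) (by positivity)
          rw [Finset.sum_Ico_eq_sum_range]
          calc ∑ k ∈ range (n - 1), (ρ * β) ^ (1 + k)
              = ρ * β * ∑ k ∈ range (n - 1), (ρ * β) ^ k := by
                rw [Finset.mul_sum]
                exact Finset.sum_congr rfl fun k _ => by rw [pow_add, pow_one]
            _ ≤ ρ * β * (1 / (1 - ρ * β)) :=
                mul_le_mul_of_nonneg_left (geo_le' hρβ0.le hρβ1 _) hρβ0.le
  calc _ ≤ (1 / (1 - ρ ^ 2)) * (1 / (1 - ρ * β)) +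
        (1 / (1 - ρ ^ 2)) * (ρ * β * (1 / (1 - ρ * β))) := add_le_add hA hB
    _ = (1 + ρ * β) / ((1 - ρ ^ 2) * (1 - ρ * β)) := by field_simp

/-- reflected double sum equality -/
lemma reflect_double_sum {ρ β : ℝ} (n : ℕ) :
    ∑ s ∈ range n, ∑ t ∈ range n, ρ ^ (n - s - 1) * ρ ^ (n - t - 1) * β ^ Nat.dist s t
      = ∑ s ∈ range n, ∑ t ∈ range n, ρ ^ s * ρ ^ t * β ^ Nat.dist s t := by
  have hstep : ∀ s ∈ range n, ∀ t ∈ range n,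
      ρ ^ (n - s - 1) * ρ ^ (n - t - 1) * β ^ Nat.dist s t
        = ρ ^ (n - 1 - s) * ρ ^ (n - 1 - t) * β ^ Nat.dist (n - 1 - s) (n - 1 - t) := by
    intro s hs t ht
    rw [Finset.mem_range] at hs ht
    have h1 : n - s - 1 = n - 1 - s := by omega
    have h2 : n - t - 1 = n - 1 - t := by omega
    have h3 : Nat.dist (n - 1 - s) (n - 1 - t) = Nat.dist s t := by
      simp only [Nat.dist]; omega
    rw [h1, h2, h3]
  calc ∑ s ∈ range n, ∑ t ∈ range n, ρ ^ (n - s - 1) * ρ ^ (n - t - 1) * β ^ Nat.dist s t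
      = ∑ s ∈ range n, ∑ t ∈ range n,
          ρ ^ (n - 1 - s) * ρ ^ (n - 1 - t) * β ^ Nat.dist (n - 1 - s) (n - 1 - t) :=
        Finset.sum_congr rfl fun s hs => Finset.sum_congr rfl fun t ht => hstep s hs t ht
    _ = ∑ s ∈ range n, ∑ t ∈ range n,
          ρ ^ (n - 1 - s) * ρ ^ t * β ^ Nat.dist (n - 1 - s) t := by
        refine Finset.sum_congr rfl fun s _ => ?_
        exact Finset.sum_range_reflect (fun t => ρ ^ (n - 1 - s) * ρ ^ t * β ^ Nat.dist (n - 1 - s) t) n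
    _ = ∑ s ∈ range n, ∑ t ∈ range n, ρ ^ s * ρ ^ t * β ^ Nat.dist s t :=
        Finset.sum_range_reflect (fun s => ∑ t ∈ range n, ρ ^ s * ρ ^ t * β ^ Nat.dist s t) n


/-- For a zero-mean weakly stationary sequence with `|γ(h)| ≤ ω β^{|h|}` and forgetting factor
`ρ ∈ (0,1)`, the normalised weighted sum `S_n / n_eff` with `S_n = ∑_{t<n} ρ^{n−t−1} Y_t` and
`n_eff = (1−ρⁿ)/(1−ρ)` satisfies
`Var(S_n/n_eff) ≤ n_eff⁻² (1+ρβ)/((1−ρ²)(1−ρβ)) ω`, and whenever `ρⁿ ≤ 1/2`,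
`Var(S_n/n_eff) ≤ (2ω(1+β)/(1−β)) n_eff⁻¹`. -/
theorem weighted_sum_variance_bound {Ω : Type*} [MeasurableSpace Ω]
    (μ : Measure Ω) [IsProbabilityMeasure μ] (Y : ℕ → Ω → ℝ)
    (hL2 : ∀ t, MemLp (Y t) 2 μ)
    (hmean : ∀ t, ∫ ω, Y t ω ∂μ = 0)
    (γ : ℕ → ℝ)
    (hstat : ∀ t h : ℕ, ∫ ω, Y t ω * Y (t + h) ω ∂μ = γ h)
    (ω0 β : ℝ) (hω : 0 < ω0) (hβ : β ∈ Set.Ioo (0 : ℝ) 1)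
    (hdecay : ∀ h : ℕ, |γ h| ≤ ω0 * β ^ h)
    (ρ : ℝ) (hρ : ρ ∈ Set.Ioo (0 : ℝ) 1)
    (n : ℕ) (hn : 1 ≤ n) :
    (∫ ω, ((∑ t ∈ Finset.range n, ρ ^ (n - t - 1) * Y t ω) / ((1 - ρ ^ n) / (1 - ρ))) ^ 2 ∂μ
        ≤ (1 / ((1 - ρ ^ n) / (1 - ρ)) ^ 2) * ((1 + ρ * β) / ((1 - ρ ^ 2) * (1 - ρ * β))) * ω0) ∧
    (ρ ^ n ≤ 1 / 2 →
      ∫ ω, ((∑ t ∈ Finset.range n, ρ ^ (n - t - 1) * Y t ω) / ((1 - ρ ^ n) / (1 - ρ))) ^ 2 ∂μ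
        ≤ (2 * ω0 * (1 + β) / (1 - β)) * ((1 - ρ ^ n) / (1 - ρ))⁻¹) := by
  obtain ⟨hρ0, hρ1⟩ := hρ
  obtain ⟨hβ0, hβ1⟩ := hβ
  have hρn : ρ ^ n < 1 := pow_lt_one₀ hρ0.le hρ1 (by omega)
  have h1ρ : (0:ℝ) < 1 - ρ := by linarith
  set e : ℝ := (1 - ρ ^ n) / (1 - ρ) with he
  have he0 : 0 < e := div_pos (by linarith) h1ρ
  have hρ2 : (0:ℝ) < 1 - ρ ^ 2 := by nlinarith
  have hρβ : (0:ℝ) < 1 - ρ * β := by nlinarith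
  have h1β : (0:ℝ) < 1 - β := by linarith
  set C : ℝ := (1 + ρ * β) / ((1 - ρ ^ 2) * (1 - ρ * β)) with hC
  have hC0 : 0 < C := by positivity
  -- integrability of products
  have hInt : ∀ s t : ℕ, Integrable (fun x => Y s x * Y t x) μ := by
    intro s t
    have h := (hL2 t).smul (φ := Y s) (hL2 s) (r := 1)
    rw [memLp_one_iff_integrable] at h
    exact h
  -- covariance formula
  have hcov : ∀ s t : ℕ, ∫ x, Y s x * Y t x ∂μ = γ (Nat.dist s t) := by
    intro s t
    rcases le_total s t with h | h
    · have := hstat s (t - s)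
      rw [Nat.add_sub_cancel' h] at this
      rw [this, Nat.dist_eq_sub_of_le h]
    · have := hstat t (s - t)
      rw [Nat.add_sub_cancel' h] at this
      rw [Nat.dist_eq_sub_of_le_right h, ← this]
      exact integral_congr_ae (Filter.Eventually.of_forall fun x => mul_comm _ _)
  -- expansion of the second moment
  have hS2 : ∫ x, (∑ t ∈ range n, ρ ^ (n - t - 1) * Y t x) ^ 2 ∂μ
      = ∑ s ∈ range n, ∑ t ∈ range n,
          (ρ ^ (n - s - 1) * ρ ^ (n - t - 1)) * γ (Nat.dist s t) := by
    have hrw : ∀ x : Ω, (∑ t ∈ range n, ρ ^ (n - t - 1) * Y t x) ^ 2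
        = ∑ s ∈ range n, ∑ t ∈ range n,
            (ρ ^ (n - s - 1) * ρ ^ (n - t - 1)) * (Y s x * Y t x) := by
      intro x
      rw [sq, Finset.sum_mul_sum]
      exact Finset.sum_congr rfl fun s _ => Finset.sum_congr rfl fun t _ => by ring
    simp_rw [hrw]
    rw [integral_finset_sum _ (fun s _ => integrable_finset_sum _
      (fun t _ => ((hInt s t).const_mul _)))]
    refine Finset.sum_congr rfl fun s _ => ?_
    rw [integral_finset_sum _ (fun t _ => ((hInt s t).const_mul _))]
    refine Finset.sum_congr rfl fun t _ => ?_
    rw [integral_const_mul, hcov]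
  -- bound on the second moment
  have hS2le : ∫ x, (∑ t ∈ range n, ρ ^ (n - t - 1) * Y t x) ^ 2 ∂μ ≤ C * ω0 := by
    rw [hS2]
    calc ∑ s ∈ range n, ∑ t ∈ range n,
          (ρ ^ (n - s - 1) * ρ ^ (n - t - 1)) * γ (Nat.dist s t)
        ≤ ∑ s ∈ range n, ∑ t ∈ range n,
          (ρ ^ (n - s - 1) * ρ ^ (n - t - 1)) * (ω0 * β ^ Nat.dist s t) := by
          refine Finset.sum_le_sum fun s _ => Finset.sum_le_sum fun t _ => ?_
          exact mul_le_mul_of_nonneg_left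
            ((le_abs_self _).trans (hdecay _)) (by positivity)
      _ = ω0 * ∑ s ∈ range n, ∑ t ∈ range n,
            ρ ^ (n - s - 1) * ρ ^ (n - t - 1) * β ^ Nat.dist s t := by
          rw [Finset.mul_sum]
          exact Finset.sum_congr rfl fun s _ => by
            rw [Finset.mul_sum]; exact Finset.sum_congr rfl fun t _ => by ring
      _ ≤ ω0 * C := by
          apply mul_le_mul_of_nonneg_left _ hω.le
          rw [reflect_double_sum, hC]
          exact double_geom_bound' hρ0 hρ1 hβ0 hβ1 n
      _ = C * ω0 := mul_comm _ _
  -- normalised second moment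
  have hmain : ∫ x, ((∑ t ∈ range n, ρ ^ (n - t - 1) * Y t x) / e) ^ 2 ∂μ
      = (∫ x, (∑ t ∈ range n, ρ ^ (n - t - 1) * Y t x) ^ 2 ∂μ) / e ^ 2 := by
    simp_rw [div_pow]
    exact integral_div _ _
  have hpart1 : ∫ x, ((∑ t ∈ range n, ρ ^ (n - t - 1) * Y t x) / e) ^ 2 ∂μ
      ≤ (1 / e ^ 2) * C * ω0 := by
    rw [hmain]
    have : (1 / e ^ 2) * C * ω0 = (C * ω0) / e ^ 2 := by ring
    rw [this]
    exact div_le_div_of_nonneg_right hS2le (by positivity) |>.trans_eq rfl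
  refine ⟨hpart1, fun h2 => ?_⟩
  -- second part
  have heC : C * ω0 ≤ (2 * ω0 * (1 + β) / (1 - β)) * e := by
    have hClee : C ≤ (1 + β) / ((1 - β) * (1 - ρ)) := by
      rw [hC, div_le_div_iff₀ (by positivity) (by positivity)]
      nlinarith [mul_pos hρ0 hβ0, mul_pos hρ0 h1β, mul_pos h1ρ hβ0, mul_pos (mul_pos hρ0 hβ0) h1ρ, mul_pos (mul_pos hρ0 hβ0) hβ0]
    have hege : 1 / (2 * (1 - ρ)) ≤ e := by
      rw [he, div_le_div_iff₀ (by positivity) h1ρ]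
      nlinarith
    calc C * ω0 ≤ ((1 + β) / ((1 - β) * (1 - ρ))) * ω0 :=
          mul_le_mul_of_nonneg_right hClee hω.le
      _ = (2 * ω0 * (1 + β) / (1 - β)) * (1 / (2 * (1 - ρ))) := by
          field_simp
      _ ≤ (2 * ω0 * (1 + β) / (1 - β)) * e :=
          mul_le_mul_of_nonneg_left hege (by positivity)
  calc ∫ x, ((∑ t ∈ range n, ρ ^ (n - t - 1) * Y t x) / e) ^ 2 ∂μ
      ≤ (1 / e ^ 2) * C * ω0 := hpart1
    _ = (C * ω0) / e ^ 2 := by ring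
    _ ≤ ((2 * ω0 * (1 + β) / (1 - β)) * e) / e ^ 2 :=
        div_le_div_of_nonneg_right heC (by positivity)
    _ = (2 * ω0 * (1 + β) / (1 - β)) * e⁻¹ := by
        field_simp
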